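/- arXiv:2312.12369 — 3 statements merged into one kernel-verified Lean document; each statement's English description precedes it below -/
import Mathlib

section
/- Let 0 < α ≤ 1, let à ∈ ℝ^{n×n} be symmetric, and let X ∈ ℝ^{n×d}. Assume the matrix I − (1−α)à is positive definite. Define g(F) = ‖F − X‖²_F + (1/α − 1) tr(Fᵀ(I − Ã)F). Then F* = α (I − (1−α)Ã)^{−1} X is the unique global minimizer of g: for all F ∈ ℝ^{n×d}, g(F*) ≤ g(F), with equality if and only if F = F*. (This is the exact-solution characterization of PPNP aggregation.) -/
/-!
With `P = 1 - (1 - α) • Ã`, the scaled objective `α g` is the quadratic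
`tr (Fᵀ P F) - 2 α tr (Fᵀ X) + α ‖X‖²`. Since `P F* = α X`, completing the square gives
`α (g F - g F*) = tr ((F - F*)ᵀ P (F - F*))`, which is positive for `F ≠ F*` because `P` is
positive definite.
-/

open Matrix

variable {m n : Type*} [Fintype m] [Fintype n]

theorem Matrix.trace_transpose_sub_mul_mul_sub {R : Type*} [CommRing R] {P : Matrix m m R}
    (hP : P.IsSymm) (F B : Matrix m n R) :
    trace ((F - B)ᵀ * P * (F - B))
      = trace (Fᵀ * P * F) - 2 * trace (Fᵀ * (P * B)) + trace (Bᵀ * P * B) := by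
  have hcross : trace (Bᵀ * (P * F)) = trace (Fᵀ * (P * B)) := by
    rw [← trace_transpose, transpose_mul, transpose_mul, transpose_transpose, hP.eq,
      Matrix.mul_assoc]
  simp only [transpose_sub, Matrix.sub_mul, Matrix.mul_sub, trace_sub, Matrix.mul_assoc, hcross]
  ring

theorem Matrix.PosDef.trace_conjTranspose_mul_mul_same_pos {R : Type*} [CommRing R]
    [PartialOrder R] [StarRing R] [IsOrderedCancelAddMonoid R] [Nontrivial R]
    {P : Matrix m m R} (hP : P.PosDef) {D : Matrix m n R} (hD : D ≠ 0) :
    0 < trace (Dᴴ * P * D) := by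
  classical
  obtain ⟨j, hj⟩ : ∃ j, D.col j ≠ 0 := by
    by_contra! h
    exact hD (ext fun i j ↦ congrFun (h j) i)
  have hjj : 0 < (Dᴴ * P * D) j j := by
    have := hP.dotProduct_mulVec_pos hj
    rw [← mulVec_single_one, star_mulVec, dotProduct_mulVec, vecMul_vecMul, ← dotProduct_mulVec,
      mulVec_mulVec, mulVec_single_one] at this
    simpa using this
  exact Finset.sum_pos' (fun i _ ↦ (hP.posSemidef.conjTranspose_mul_mul_same D).diag_nonneg)
    ⟨j, Finset.mem_univ j, hjj⟩

theorem Matrix.sum_sum_sq_eq_trace_transpose_mul_self {R : Type*} [CommSemiring R]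
    (A : Matrix m n R) : ∑ i, ∑ j, A i j ^ 2 = trace (Aᵀ * A) := by
  simp only [trace, diag, mul_apply, transpose_apply, sq]
  exact Finset.sum_comm

section Objective

variable {K : Type*} [Field K] [DecidableEq m]

def ppnpObjective (α : K) (A : Matrix m m K) (X F : Matrix m n K) : K :=
  (∑ i, ∑ j, (F i j - X i j) ^ 2) + (1 / α - 1) * trace (Fᵀ * (1 - A) * F)

theorem mul_ppnpObjective {α : K} (hα : α ≠ 0) (A : Matrix m m K) (X F : Matrix m n K) :
    α * ppnpObjective α A X F
      = trace (Fᵀ * (1 - (1 - α) • A) * F) - 2 * trace (Fᵀ * (α • X)) + α * trace (Xᵀ * X) := by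
  have hXF : trace (Xᵀ * F) = trace (Fᵀ * X) := by
    rw [← trace_transpose, transpose_mul, transpose_transpose]
  have hsq : ∑ i, ∑ j, (F i j - X i j) ^ 2 = trace ((F - X)ᵀ * (F - X)) :=
    sum_sum_sq_eq_trace_transpose_mul_self (F - X)
  rw [ppnpObjective, hsq]
  simp only [transpose_sub, Matrix.sub_mul, Matrix.mul_sub, Matrix.mul_smul, Matrix.smul_mul,
    Matrix.mul_one, trace_sub, trace_smul, smul_eq_mul, hXF]
  field_simp
  ring

theorem mul_ppnpObjective_sub_eq {α : K} (hα : α ≠ 0) {A : Matrix m m K}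
    (hsymm : (1 - (1 - α) • A).IsSymm) {X B : Matrix m n K}
    (hB : (1 - (1 - α) • A) * B = α • X) (F : Matrix m n K) :
    α * (ppnpObjective α A X F - ppnpObjective α A X B)
      = trace ((F - B)ᵀ * (1 - (1 - α) • A) * (F - B)) := by
  rw [mul_sub, mul_ppnpObjective hα, mul_ppnpObjective hα,
    trace_transpose_sub_mul_mul_sub hsymm, Matrix.mul_assoc Bᵀ, hB]
  ring

end Objective

theorem ppnp_exact_minimizer_general (n d : ℕ) (α : ℝ) (hα1 : 0 < α)
    (Atil : Matrix (Fin n) (Fin n) ℝ)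
    (X : Matrix (Fin n) (Fin d) ℝ)
    (hpd : (1 - (1 - α) • Atil).PosDef) :
    let g : Matrix (Fin n) (Fin d) ℝ → ℝ := fun F =>
      (∑ i, ∑ j, (F i j - X i j) ^ 2)
        + (1 / α - 1) * Matrix.trace (Fᵀ * (1 - Atil) * F)
    let Fstar : Matrix (Fin n) (Fin d) ℝ := α • ((1 - (1 - α) • Atil)⁻¹ * X)
    ∀ F : Matrix (Fin n) (Fin d) ℝ, g Fstar ≤ g F ∧ (g Fstar = g F ↔ F = Fstar) := by
  intro g Fstar F
  have hsymm : (1 - (1 - α) • Atil).IsSymm := by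
    simpa only [IsHermitian, IsSymm, conjTranspose_eq_transpose_of_trivial] using hpd.isHermitian
  have hFstar : (1 - (1 - α) • Atil) * Fstar = α • X := by
    rw [Matrix.mul_smul, ← Matrix.mul_assoc,
      mul_nonsing_inv _ (isUnit_iff_ne_zero.2 hpd.det_pos.ne'), Matrix.one_mul]
  have hgap : α * (g F - g Fstar)
      = trace ((F - Fstar)ᴴ * (1 - (1 - α) • Atil) * (F - Fstar)) := by
    rw [conjTranspose_eq_transpose_of_trivial]
    exact mul_ppnpObjective_sub_eq hα1.ne' hsymm hFstar F
  rcases eq_or_ne F Fstar with rfl | hne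
  · simp
  have hlt : g Fstar < g F := by
    have hpos := hpd.trace_conjTranspose_mul_mul_same_pos (sub_ne_zero.2 hne)
    rw [← hgap] at hpos
    exact sub_pos.1 (pos_of_mul_pos_right hpos hα1.le)
  exact ⟨hlt.le, iff_of_false hlt.ne hne⟩

/-- PPNP exact-solution characterization: for `0 < α ≤ 1`, `Ã` symmetric with
`I − (1−α)Ã` positive definite, and `g(F) = ‖F − X‖²_F + (1/α − 1)tr(Fᵀ(I − Ã)F)`,
the matrix `F* = α(I − (1−α)Ã)⁻¹X` is the unique global minimizer of `g`:
`g(F*) ≤ g(F)` for all `F`, with equality iff `F = F*`. -/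
theorem ppnp_exact_minimizer (n d : ℕ) (α : ℝ) (hα1 : 0 < α) (hα2 : α ≤ 1)
    (Atil : Matrix (Fin n) (Fin n) ℝ) (hsym : Atil.IsSymm)
    (X : Matrix (Fin n) (Fin d) ℝ)
    (hpd : (1 - (1 - α) • Atil).PosDef) :
    let g : Matrix (Fin n) (Fin d) ℝ → ℝ := fun F =>
      (∑ i, ∑ j, (F i j - X i j) ^ 2)
        + (1 / α - 1) * Matrix.trace (Fᵀ * (1 - Atil) * F)
    let Fstar : Matrix (Fin n) (Fin d) ℝ := α • ((1 - (1 - α) • Atil)⁻¹ * X)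
    ∀ F : Matrix (Fin n) (Fin d) ℝ, g Fstar ≤ g F ∧ (g Fstar = g F ↔ F = Fstar) :=
  ppnp_exact_minimizer_general n d α hα1 Atil X hpd
end

section
/- Let 0 < α ≤ 1, let à ∈ ℝ^{n×n} be symmetric, X ∈ ℝ^{n×d}, and define g(F) = ‖F − X‖²_F + (1/α − 1) tr(Fᵀ(I − Ã)F). Then g is differentiable with ∇g(F) = 2(F − X) + 2(1/α − 1)(I − Ã)F (gradient with respect to the Frobenius inner product), and one gradient descent step with step size α/2 from any F ∈ ℝ^{n×d} yields the APPNP update: F − (α/2)∇g(F) = (1−α)ÃF + αX. -/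
/-! Both terms of `g` are quadratic forms `q_M(F) = tr(Fᵀ M F)` of the bilinear form
`B_M(G, H) = tr(Gᵀ M H)`: `g(F) = q_1(F - X) + (1/α - 1) q_{I - Ã}(F)`. For symmetric `M`,
`B_M` is symmetric, so `dq_M(F) = 2 B_M(F, ·)`, and `B_M(F, H) = ∑ᵢⱼ (M F)ᵢⱼ Hᵢⱼ` exhibits the
gradient `2 M F`. The descent step is then the identity
`F - (F - X) - (1 - α)(F - ÃF) = (1 - α)ÃF + αX`. -/

open Matrix

section TraceForm

variable {m n : Type*} [Fintype m] [Fintype n]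

noncomputable def traceForm (M : Matrix m m ℝ) : (m → n → ℝ) →L[ℝ] (m → n → ℝ) →L[ℝ] ℝ :=
  LinearMap.toContinuousBilinearMap <| LinearMap.mk₂ ℝ (fun G H => trace ((of G)ᵀ * M * of H))
    (fun _ _ _ => by simp [← of_add_of, Matrix.add_mul, trace_add])
    (fun _ _ _ => by simp [← smul_of, Matrix.smul_mul, trace_smul])
    (fun _ _ _ => by simp [← of_add_of, Matrix.mul_add, trace_add])
    (fun _ _ _ => by simp [← smul_of, Matrix.mul_smul, trace_smul])

theorem traceForm_apply (M : Matrix m m ℝ) (G H : m → n → ℝ) :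
    traceForm M G H = trace ((of G)ᵀ * M * of H) := rfl

theorem traceForm_apply_eq_sum (M : Matrix m m ℝ) (G H : m → n → ℝ) :
    traceForm M G H = ∑ i, ∑ j, (Mᵀ * of G : Matrix m n ℝ) i j * H i j := by
  simp only [traceForm_apply, trace, diag, mul_apply, transpose_apply, of_apply, Finset.sum_mul]
  rw [Finset.sum_comm]
  exact Finset.sum_congr rfl fun i _ => Finset.sum_congr rfl fun j _ =>
    Finset.sum_congr rfl fun k _ => by ring

theorem traceForm_comm {M : Matrix m m ℝ} (hM : M.IsSymm) (G H : m → n → ℝ) :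
    traceForm M G H = traceForm M H G := by
  rw [traceForm_apply, traceForm_apply, ← trace_transpose]
  simp [Matrix.transpose_mul, hM.eq, Matrix.mul_assoc]

theorem hasFDerivAt_traceForm_self {M : Matrix m m ℝ} (hM : M.IsSymm) (F : m → n → ℝ) :
    HasFDerivAt (fun G => traceForm M G G) ((2 : ℝ) • traceForm M F) F := by
  refine ((traceForm M).hasFDerivAt_of_bilinear (hasFDerivAt_id F)
    (hasFDerivAt_id F)).congr_fderiv ?_
  ext H
  simp [traceForm_comm hM H F, two_smul]

theorem traceForm_one_self [DecidableEq m] (G : m → n → ℝ) :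
    traceForm 1 G G = ∑ i, ∑ j, G i j ^ 2 := by
  simp [traceForm_apply_eq_sum, sq]

end TraceForm

theorem appnp_aggregation_as_gradient_step_general (n d : ℕ) (α : ℝ) (hα1 : 0 < α)
    (Atil : Matrix (Fin n) (Fin n) ℝ) (hsym : Atil.IsSymm) (X : Fin n → Fin d → ℝ) :
    let g : (Fin n → Fin d → ℝ) → ℝ := fun F =>
      (∑ i, ∑ j, (F i j - X i j) ^ 2)
        + (1 / α - 1) * Matrix.trace ((Matrix.of F)ᵀ * (1 - Atil) * Matrix.of F)
    let grad : (Fin n → Fin d → ℝ) → Fin n → Fin d → ℝ := fun F i j =>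
      2 * (F i j - X i j)
        + 2 * (1 / α - 1) * (((1 - Atil) * Matrix.of F : Matrix (Fin n) (Fin d) ℝ) i j)
    Differentiable ℝ g ∧
    (∀ (F H : Fin n → Fin d → ℝ),
      fderiv ℝ g F H = ∑ i, ∑ j, grad F i j * H i j) ∧
    (∀ (F : Fin n → Fin d → ℝ) (i : Fin n) (j : Fin d),
      F i j - α / 2 * grad F i j
        = (1 - α) * ((Atil * Matrix.of F : Matrix (Fin n) (Fin d) ℝ) i j) + α * X i j) := by
  intro g grad
  have hL : (1 - Atil).IsSymm := isSymm_one.sub hsym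
  have hg_eq : g = fun G =>
      traceForm 1 (G - X) (G - X) + (1 / α - 1) * traceForm (1 - Atil) G G := by
    funext G
    rw [traceForm_one_self]
    rfl
  have hg : ∀ F, HasFDerivAt g
      ((2 : ℝ) • traceForm 1 (F - X) + (1 / α - 1) • (2 : ℝ) • traceForm (1 - Atil) F) F := by
    intro F
    rw [hg_eq]
    exact ((hasFDerivAt_traceForm_self isSymm_one (F - X)).comp F
      ((hasFDerivAt_id F).sub_const X)).add
      ((hasFDerivAt_traceForm_self hL F).const_smul (1 / α - 1))
  refine ⟨fun F => (hg F).differentiableAt, fun F H => ?_, fun F i j => ?_⟩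
  · simp only [(hg F).fderiv, _root_.add_apply, _root_.smul_apply, smul_eq_mul,
      traceForm_apply_eq_sum, transpose_one, hL.eq, Matrix.one_mul, of_apply, Pi.sub_apply,
      Finset.mul_sum, ← Finset.sum_add_distrib]
    exact Finset.sum_congr rfl fun i _ => Finset.sum_congr rfl fun j _ => by simp only [grad]; ring
  · have hLF : ((1 - Atil) * of F : Matrix (Fin n) (Fin d) ℝ) i j
        = F i j - (Atil * of F) i j := by
      simp [Matrix.sub_mul]
    simp only [grad, hLF]
    field_simp
    ring

/-- APPNP update as a gradient descent step: for `0 < α ≤ 1`, `Ã` symmetric, and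
`g(F) = ‖F − X‖²_F + (1/α − 1)tr(Fᵀ(I − Ã)F)`, `g` is differentiable with gradient
`∇g(F) = 2(F − X) + 2(1/α − 1)(I − Ã)F` (w.r.t. the Frobenius inner product), and one
gradient descent step with step size `α/2` yields `F − (α/2)∇g(F) = (1−α)ÃF + αX`. -/
theorem appnp_aggregation_as_gradient_step (n d : ℕ) (α : ℝ) (hα1 : 0 < α) (hα2 : α ≤ 1)
    (Atil : Matrix (Fin n) (Fin n) ℝ) (hsym : Atil.IsSymm) (X : Fin n → Fin d → ℝ) :
    let g : (Fin n → Fin d → ℝ) → ℝ := fun F =>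
      (∑ i, ∑ j, (F i j - X i j) ^ 2)
        + (1 / α - 1) * Matrix.trace ((Matrix.of F)ᵀ * (1 - Atil) * Matrix.of F)
    let grad : (Fin n → Fin d → ℝ) → Fin n → Fin d → ℝ := fun F i j =>
      2 * (F i j - X i j)
        + 2 * (1 / α - 1) * (((1 - Atil) * Matrix.of F : Matrix (Fin n) (Fin d) ℝ) i j)
    Differentiable ℝ g ∧
    (∀ (F H : Fin n → Fin d → ℝ),
      fderiv ℝ g F H = ∑ i, ∑ j, grad F i j * H i j) ∧
    (∀ (F : Fin n → Fin d → ℝ) (i : Fin n) (j : Fin d),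
      F i j - α / 2 * grad F i j
        = (1 - α) * ((Atil * Matrix.of F : Matrix (Fin n) (Fin d) ℝ) i j) + α * X i j) :=
  appnp_aggregation_as_gradient_step_general n d α hα1 Atil hsym X
end

section
/- Let λ_s ≥ 0, let à ∈ ℝ^{n×n} be symmetric, set L̃ = I − Ã, let X ∈ ℝ^{n×d}, and define h_s(F) = (λ_s/2) tr(Fᵀ L̃ F) + (1/2) ‖F − X‖²_F with gradient ∇h_s(F) = λ_s L̃ F + F − X. Then with step size γ = 1/(1 + λ_s), for every F ∈ ℝ^{n×d} the gradient descent step satisfies F − γ∇h_s(F) = γX + (1 − γ)ÃF. (This identity shows Step ① of FMP, propagation with skip connection, is exactly one gradient descent step on the smoothness objective.) -/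
open Matrix

/-- FMP Step ① (propagation with skip connection) as a gradient descent step: for
`λ_s ≥ 0`, `Ã` symmetric, `L̃ = I − Ã`, the gradient `∇h_s(F) = λ_s L̃ F + F − X` of the
smoothness objective `h_s(F) = (λ_s/2)tr(Fᵀ L̃ F) + (1/2)‖F − X‖²_F`, and step size
`γ = 1/(1 + λ_s)`, every `F` satisfies `F − γ∇h_s(F) = γX + (1 − γ)ÃF`. -/
theorem fmp_propagation_step (n d : ℕ) (lam : ℝ) (hlam : 0 ≤ lam)
    (Atil : Matrix (Fin n) (Fin n) ℝ) (hsym : Atil.IsSymm)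
    (X : Matrix (Fin n) (Fin d) ℝ) :
    let Ltil : Matrix (Fin n) (Fin n) ℝ := 1 - Atil
    let γ : ℝ := 1 / (1 + lam)
    ∀ F : Matrix (Fin n) (Fin d) ℝ,
      F - γ • (lam • (Ltil * F) + F - X) = γ • X + (1 - γ) • (Atil * F) := by
  intro Ltil γ F
  have h1 : (1 : ℝ) + lam ≠ 0 := by positivity
  ext i j
  simp only [Ltil, γ, Matrix.sub_apply, Matrix.add_apply, Matrix.smul_apply,
    Matrix.sub_mul, Matrix.one_mul, smul_eq_mul]
  field_simp
  ring
end
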